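/- Let X be a complete metric space, φ1, φ2 : X → ℝ ∪ {+∞} lower semicontinuous and x̄ ∈ dom φ1 ∩ dom φ2 a quasiuniform stationary point of φ1+φ2. Then for every ε > 0 there exists ρ ∈ (0,ε) such that for every η > 0 there exist a number γ > 0 and points x̂1, x̂2 ∈ X satisfying: (i) max{d(x̂1,x̄), d(x̂2,x̄)} < ρ; (ii) d(x̂1,x̂2) < η; (iii) φ_γ(x̂1,x̂2) ≤ (φ1+φ2)(x̄); and (iv) for all u1, u2 ∈ B̄_ρ(x̄) with (u1,u2) ≠ (x̂1,x̂2), φ_γ(x̂1,x̂2) − φ_γ(u1,u2) < ε · max{d(u1,x̂1), d(u2,x̂2)}; where φ_γ(u1,u2) := φ1(u1) + φ2(u2) + γ d(u1,u2). -/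

import Mathlib

/-!
Stationarity at level `ε/4` on a small ball `B_δ(x̄)` bounds `φ1 x1 + φ2 x2` from below by
`(φ1 + φ2)(x̄) - εδ/4` for all pairs of points of `B̄_{δ/2}(x̄)` that are close enough to each
other. On the complete set of such pairs, `(x̄, x̄)` is therefore an `εδ/4`-minimiser of
`φ_γ(u1, u2) = φ1 u1 + φ2 u2 + γ d(u1, u2)`, and Ekeland's variational principle with constant `ε`
gives a point `(x̂1, x̂2)` within `δ/4` of `(x̄, x̄)` satisfying (iv) on that set. Taking `γ` large
makes every pair that is not close lie above `(φ1 + φ2)(x̄) ≥ φ_γ(x̂1, x̂2)`, so (iv) holds on all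
of `B̄_{δ/2}(x̄)²`.
-/

open Metric Set Filter

noncomputable section

/-- `V` is an essentially interior subset of `U`. -/
def EssInt {X : Type*} [MetricSpace X] (U V : Set X) : Prop :=
  ∃ ρ > (0 : ℝ), ∀ v ∈ V, Metric.ball v ρ ⊆ U

/-- The uniform infimum `Λ°_W(φ1,φ2)` of the decoupled sum over `W`. -/
def lambdaCirc {X : Type*} [MetricSpace X] (φ1 φ2 : X → EReal) (W : Set X) : EReal :=
  ⨆ η : {η : ℝ // 0 < η},
    sInf {v : EReal | ∃ x1 ∈ W, ∃ x2 ∈ W, dist x1 x2 < η.1 ∧ v = φ1 x1 + φ2 x2}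

/-- The quasiuniform infimum `Λ†_U(φ1,φ2)`. -/
def lambdaDag {X : Type*} [MetricSpace X] (φ1 φ2 : X → EReal) (U : Set X) : EReal :=
  ⨅ V : {V : Set X // EssInt U V}, lambdaCirc φ1 φ2 V.1

/-- `inf_U (φ1 + φ2)`. -/
def infSum {X : Type*} [MetricSpace X] (φ1 φ2 : X → EReal) (U : Set X) : EReal :=
  sInf {v : EReal | ∃ x ∈ U, v = φ1 x + φ2 x}

/-- `(φ1 ♦ φ2)_W (x1, x2)`. -/
def diamond {X : Type*} [MetricSpace X] (φ1 φ2 : X → EReal) (W : Set X) (x1 x2 : X) : EReal :=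
  sInf {v : EReal | ∃ x ∈ W,
    v = max (max ((dist x x1 : ℝ) : EReal) ((dist x x2 : ℝ) : EReal))
        (φ1 x + φ2 x - φ1 x1 - φ2 x2)}

/-- `Θ°_U(φ1,φ2)` (with the convention `sup ∅ = 0`). -/
def thetaCirc {X : Type*} [MetricSpace X] (φ1 φ2 : X → EReal) (U : Set X) : EReal :=
  ⨅ η : {η : ℝ // 0 < η},
    sSup (insert (0 : EReal)
      {v : EReal | ∃ x1 x2 : X, φ1 x1 < ⊤ ∧ x1 ∈ U ∧ φ2 x2 < ⊤ ∧ x2 ∈ U ∧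
        dist x1 x2 < η.1 ∧ v = diamond φ1 φ2 U x1 x2})

/-- `Θ†_{U,W}(φ1,φ2)`: as `Θ†_U`, but with the `♦`-expression taken over `W`. -/
def thetaDagW {X : Type*} [MetricSpace X] (φ1 φ2 : X → EReal) (U W : Set X) : EReal :=
  ⨆ V : {V : Set X // EssInt U V}, ⨅ η : {η : ℝ // 0 < η},
    sSup (insert (0 : EReal)
      {v : EReal | ∃ x1 x2 : X, φ1 x1 < ⊤ ∧ x1 ∈ V.1 ∧ φ2 x2 < ⊤ ∧ x2 ∈ V.1 ∧
        dist x1 x2 < η.1 ∧ v = diamond φ1 φ2 W x1 x2})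

/-- `Θ†_U(φ1,φ2)` (with the convention `sup ∅ = 0`). -/
def thetaDag {X : Type*} [MetricSpace X] (φ1 φ2 : X → EReal) (U : Set X) : EReal :=
  thetaDagW φ1 φ2 U U

/-- Indicator function of a set, in the `ℝ ∪ {+∞}` sense. -/
def indFn {X : Type*} (Ω : Set X) : X → EReal := fun x =>
  haveI := Classical.propDecidable (x ∈ Ω)
  if x ∈ Ω then 0 else ⊤

/-- `Λ_U(φ1,φ2)`: the uniform infimum of `(φ1,φ2)` around `U`. -/
def lambdaFull {X : Type*} [MetricSpace X] (φ1 φ2 : X → EReal) (U : Set X) : EReal :=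
  ⨆ η : {η : ℝ // 0 < η}, ⨆ ε : {ε : ℝ // 0 < ε},
    sInf {v : EReal | ∃ x1 x2 : X,
      dist x1 x2 < η.1 ∧ Metric.infDist x1 U < ε.1 ∧ v = φ1 x1 + φ2 x2}

open Topology

section Clamp

variable {m C : ℝ}

lemma coe_toReal_max_min (hmC : m ≤ C) (x : EReal) :
    (((max (m : EReal) (min x C)).toReal : ℝ) : EReal) = max (m : EReal) (min x C) :=
  EReal.coe_toReal (ne_top_of_le_ne_top (EReal.coe_ne_top C)
      (max_le (EReal.coe_le_coe_iff.2 hmC) (min_le_right _ _)))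
    (ne_bot_of_le_ne_bot (EReal.coe_ne_bot m) (le_max_left _ _))

lemma monotone_toReal_max_min (hmC : m ≤ C) :
    Monotone fun x : EReal => (max (m : EReal) (min x C)).toReal := fun x y hxy => by
  rw [← EReal.coe_le_coe_iff, coe_toReal_max_min hmC, coe_toReal_max_min hmC]
  gcongr

lemma continuous_toReal_max_min (hmC : m ≤ C) :
    Continuous fun x : EReal => (max (m : EReal) (min x C)).toReal :=
  EReal.continuousOn_toReal.comp_continuous (continuous_const.max (continuous_id.min
    continuous_const)) fun x => by
      rw [← coe_toReal_max_min hmC x]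
      simp

end Clamp

section Ekeland

variable {Y : Type*} [MetricSpace Y]

def ekelandSet (S : Set Y) (g : Y → ℝ) (α : ℝ) (y : Y) : Set Y :=
  {z ∈ S | g z + α * dist z y ≤ g y}

variable {S : Set Y} {g : Y → ℝ} {α m ε : ℝ} {y₀ : Y}

lemma self_mem_ekelandSet {y : Y} (hy : y ∈ S) : y ∈ ekelandSet S g α y :=
  ⟨hy, by simp⟩

lemma ekelandSet_subset (hα : 0 ≤ α) {y z : Y} (hz : z ∈ ekelandSet S g α y) :
    ekelandSet S g α z ⊆ ekelandSet S g α y := fun w hw => by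
  have := mul_le_mul_of_nonneg_left (dist_triangle w z y) hα
  exact ⟨hw.1, by linarith [hw.2, hz.2]⟩

lemma isClosed_ekelandSet (hS : IsClosed S) (hg : LowerSemicontinuous g) (y : Y) :
    IsClosed (ekelandSet S g α y) :=
  hS.inter <| (hg.add (continuous_const.mul
    (continuous_id.dist continuous_const)).lowerSemicontinuous).isClosed_preimage (g y)

lemma exists_almost_min_ekelandSet (hm : ∀ y ∈ S, m ≤ g y) {y : Y} (hy : y ∈ S) {t : ℝ}
    (ht : 0 < t) : ∃ z ∈ ekelandSet S g α y, ∀ w ∈ ekelandSet S g α y, g z ≤ g w + t := by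
  have hne : (g '' ekelandSet S g α y).Nonempty := ⟨g y, y, self_mem_ekelandSet hy, rfl⟩
  have hbdd : BddBelow (g '' ekelandSet S g α y) := ⟨m, by rintro _ ⟨w, hw, rfl⟩; exact hm w hw.1⟩
  obtain ⟨_, ⟨z, hz, rfl⟩, hlt⟩ := exists_lt_of_csInf_lt hne (lt_add_of_pos_right _ ht)
  exact ⟨z, hz, fun w hw => by linarith [csInf_le hbdd (mem_image_of_mem g hw)]⟩

lemma exists_ekeland_seq (hα : 0 < α) (hm : ∀ y ∈ S, m ≤ g y) (hy₀ : y₀ ∈ S) :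
    ∃ y : ℕ → Y, y 0 = y₀ ∧ (∀ n k, n ≤ k → y k ∈ ekelandSet S g α (y n)) ∧
      ∀ n, ∀ z ∈ ekelandSet S g α (y (n + 1)), dist z (y (n + 1)) ≤ (1 / 2) ^ n / α := by
  choose! next hnext using fun (n : ℕ) y (hy : y ∈ S) =>
    exists_almost_min_ekelandSet (α := α) hm hy (t := (1 / 2) ^ n) (by positivity)
  let y : ℕ → Y := fun n => Nat.rec (motive := fun _ => Y) y₀ next n
  have hyS : ∀ n, y n ∈ S := by
    intro n
    induction n with
    | zero => exact hy₀
    | succ n ih => exact (hnext n (y n) ih).1.1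
  refine ⟨y, rfl, fun n k hnk => ?_, fun n z hz => ?_⟩
  · induction k, hnk using Nat.le_induction with
    | base => exact self_mem_ekelandSet (hyS n)
    | succ k _ ih => exact ekelandSet_subset hα.le ih (hnext k _ (hyS k)).1
  · have hzn := ekelandSet_subset hα.le (hnext n _ (hyS n)).1 hz
    rw [le_div_iff₀' hα]
    linarith [(hnext n _ (hyS n)).2 z hzn, hz.2]

theorem IsComplete.exists_ekeland_point (hS : IsComplete S) (hg : LowerSemicontinuous g)
    (hα : 0 < α) (hm : ∀ y ∈ S, m ≤ g y) (hy₀ : y₀ ∈ S) (h₀ : g y₀ ≤ m + ε) :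
    ∃ ŷ ∈ S, g ŷ ≤ g y₀ ∧ α * dist ŷ y₀ ≤ ε ∧
      ∀ u ∈ S, u ≠ ŷ → g ŷ < g u + α * dist u ŷ := by
  obtain ⟨y, rfl, hmem, hclose⟩ := exists_ekeland_seq hα hm hy₀
  have hgeom : Tendsto (fun n : ℕ => (1 / 2 : ℝ) ^ n / α) atTop (𝓝 0) := by
    simpa using (tendsto_pow_atTop_nhds_zero_of_lt_one (by norm_num : (0 : ℝ) ≤ 1 / 2)
      (by norm_num)).div_const α
  have hlim : ∀ z, (∀ n, z ∈ ekelandSet S g α (y n)) → Tendsto (fun n => y (n + 1)) atTop (𝓝 z) :=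
    fun z hz => tendsto_iff_dist_tendsto_zero.2 <| squeeze_zero (fun _ => dist_nonneg)
      (fun n => dist_comm (y (n + 1)) z ▸ hclose n z (hz _)) hgeom
  have hcauchy : CauchySeq fun n => y (n + 1) := by
    refine cauchySeq_of_le_tendsto_0 (fun N => 2 * ((1 / 2) ^ N / α)) (fun n k N hn hk => ?_)
      (by simpa using hgeom.const_mul 2)
    have h1 := hclose N _ (hmem _ _ (Nat.succ_le_succ hn))
    have h2 := hclose N _ (hmem _ _ (Nat.succ_le_succ hk))
    linarith [dist_triangle_right (y (n + 1)) (y (k + 1)) (y (N + 1))]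
  obtain ⟨ŷ, hŷS, hŷ⟩ :=
    cauchySeq_tendsto_of_isComplete hS (fun n => (hmem _ _ le_self_add).1) hcauchy
  have hŷmem : ∀ n, ŷ ∈ ekelandSet S g α (y n) := fun n =>
    (isClosed_ekelandSet hS.isClosed hg _).mem_of_tendsto hŷ
      (eventually_ge_atTop n |>.mono fun k hk => hmem _ _ (by omega))
  have hŷ₀ := (hŷmem 0).2
  refine ⟨ŷ, hŷS, by nlinarith [dist_nonneg (x := ŷ) (y := y 0)], by linarith [hm ŷ hŷS],
    fun u hu hne => ?_⟩
  by_contra! hle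
  -- `u` would lie in every set of the sequence, hence be the limit of the sequence
  have hu_mem : ∀ n, u ∈ ekelandSet S g α (y n) := fun n =>
    ekelandSet_subset hα.le (hŷmem n) ⟨hu, hle⟩
  exact hne (tendsto_nhds_unique (hlim u hu_mem) hŷ)

/-- Reduced to the real case by truncating `g` to `[m, m + ε + 1]`. -/
theorem IsComplete.exists_ekeland_point_ereal {g : Y → EReal} (hS : IsComplete S)
    (hg : LowerSemicontinuous g) (hα : 0 < α) (hm : ∀ y ∈ S, (m : EReal) ≤ g y)
    (hy₀ : y₀ ∈ S) (h₀ : g y₀ ≤ ((m + ε : ℝ) : EReal)) :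
    ∃ ŷ ∈ S, g ŷ ≤ g y₀ ∧ α * dist ŷ y₀ ≤ ε ∧
      ∀ u ∈ S, u ≠ ŷ → g ŷ < g u + ((α * dist u ŷ : ℝ) : EReal) := by
  set C := m + ε + 1
  have hε : 0 ≤ ε := by
    have := (hm y₀ hy₀).trans h₀
    norm_cast at this
    linarith
  have hmC : m ≤ C := by linarith
  set h : EReal → ℝ := fun x => (max (m : EReal) (min x C)).toReal
  have hcoe : ∀ x, (h x : EReal) = max (m : EReal) (min x C) := coe_toReal_max_min hmC
  have hle : ∀ x, (m : EReal) ≤ x → (h x : EReal) ≤ x := fun x hx => by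
    rw [hcoe]
    exact max_le hx (min_le_left _ _)
  have hfix : ∀ x, (m : EReal) ≤ x → x ≤ C → (h x : EReal) = x := fun x hmx hxC => by
    rw [hcoe, min_eq_left hxC, max_eq_right hmx]
  have hhy₀ := hfix _ (hm y₀ hy₀) (h₀.trans (EReal.coe_le_coe_iff.2 (by linarith)))
  obtain ⟨ŷ, hŷS, hŷy₀, hdist, hmin⟩ := hS.exists_ekeland_point
    ((continuous_toReal_max_min hmC).comp_lowerSemicontinuous hg (monotone_toReal_max_min hmC))
    hα (m := m) (ε := ε) (fun y _ => by
      rw [← EReal.coe_le_coe_iff, Function.comp, hcoe]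
      exact le_max_left _ _)
    hy₀ (by rw [← EReal.coe_le_coe_iff, Function.comp, hhy₀]; exact h₀)
  have hhŷ : (h (g ŷ) : EReal) = g ŷ := by
    refine hfix _ (hm ŷ hŷS) (le_of_not_gt fun hC => ?_)
    have : (h (g ŷ) : EReal) = C := by
      rw [hcoe, min_eq_right hC.le, max_eq_right (EReal.coe_le_coe_iff.2 hmC)]
    have hŷ' : h (g ŷ) ≤ m + ε := by
      rw [← EReal.coe_le_coe_iff]
      exact (EReal.coe_le_coe_iff.2 hŷy₀).trans (hhy₀ ▸ h₀)
    norm_cast at this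
    linarith
  refine ⟨ŷ, hŷS, ?_, hdist, fun u hu hne => ?_⟩
  · rw [← hhŷ, ← hhy₀]
    exact EReal.coe_le_coe_iff.2 hŷy₀
  · calc g ŷ = (h (g ŷ) : EReal) := hhŷ.symm
      _ < ((h (g u) + α * dist u ŷ : ℝ) : EReal) := EReal.coe_lt_coe_iff.2 (hmin u hu hne)
      _ ≤ g u + ((α * dist u ŷ : ℝ) : EReal) := by
        rw [EReal.coe_add]
        gcongr
        exact hle _ (hm u hu)

end Ekeland

lemma LowerSemicontinuous.add_of_ne_bot {α : Type*} [TopologicalSpace α] {f g : α → EReal}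
    (hf : LowerSemicontinuous f) (hg : LowerSemicontinuous g) (hf' : ∀ x, f x ≠ ⊥)
    (hg' : ∀ x, g x ≠ ⊥) : LowerSemicontinuous fun x => f x + g x :=
  hf.add' hg fun x => EReal.continuousAt_add (Or.inr (hg' x)) (Or.inl (hf' x))

lemma lowerSemicontinuous_add_prod {X Y : Type*} [TopologicalSpace X] [TopologicalSpace Y]
    {φ1 : X → EReal} {φ2 : Y → EReal} (hlsc1 : LowerSemicontinuous φ1)
    (hlsc2 : LowerSemicontinuous φ2) (hbot1 : ∀ x, φ1 x ≠ ⊥) (hbot2 : ∀ y, φ2 y ≠ ⊥) :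
    LowerSemicontinuous fun p : X × Y => φ1 p.1 + φ2 p.2 :=
  (hlsc1.comp continuous_fst).add_of_ne_bot (hlsc2.comp continuous_snd)
    (fun p => hbot1 p.1) (fun p => hbot2 p.2)

section PenalizedSum

variable {X : Type*} [MetricSpace X] {φ1 φ2 : X → EReal}

/-- The paper's `φ_γ`. -/
def penalizedSum (φ1 φ2 : X → EReal) (γ : ℝ) (p : X × X) : EReal :=
  φ1 p.1 + φ2 p.2 + ((γ * dist p.1 p.2 : ℝ) : EReal)

lemma penalizedSum_self (γ : ℝ) (x : X) : penalizedSum φ1 φ2 γ (x, x) = φ1 x + φ2 x := by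
  simp [penalizedSum]

lemma lowerSemicontinuous_penalizedSum (hlsc1 : LowerSemicontinuous φ1)
    (hlsc2 : LowerSemicontinuous φ2) (hbot1 : ∀ x, φ1 x ≠ ⊥) (hbot2 : ∀ x, φ2 x ≠ ⊥) (γ : ℝ) :
    LowerSemicontinuous (penalizedSum φ1 φ2 γ) :=
  (lowerSemicontinuous_add_prod hlsc1 hlsc2 hbot1 hbot2).add_of_ne_bot
    (continuous_coe_real_ereal.comp
      (continuous_const.mul (continuous_fst.dist continuous_snd))).lowerSemicontinuous
    (fun _ => EReal.add_ne_bot_iff.2 ⟨hbot1 _, hbot2 _⟩) fun _ => EReal.coe_ne_bot _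

lemma lt_penalizedSum {c t γ : ℝ} {p : X × X} (h : (c : EReal) < φ1 p.1 + φ2 p.2)
    (ht : t ≤ γ * dist p.1 p.2) : ((c + t : ℝ) : EReal) < penalizedSum φ1 φ2 γ p := by
  rw [EReal.coe_add]
  exact EReal.add_lt_add_of_lt_of_le h (EReal.coe_le_coe_iff.2 ht) (EReal.coe_ne_bot _)
    (EReal.coe_ne_top _)

lemma essInt_ball_closedBall {x : X} {ρ δ : ℝ} (h : ρ < δ) :
    EssInt (ball x δ) (closedBall x ρ) :=
  ⟨δ - ρ, sub_pos.2 h, fun v hv z hz => by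
    rw [mem_closedBall] at hv
    rw [mem_ball] at hz ⊢
    linarith [dist_triangle z v x]⟩

lemma exists_forall_lt_add_of_lt_lambdaDag {U V : Set X} (hV : EssInt U V) {c : EReal}
    (hc : c < lambdaDag φ1 φ2 U) :
    ∃ η > 0, ∀ x1 ∈ V, ∀ x2 ∈ V, dist x1 x2 < η → c < φ1 x1 + φ2 x2 := by
  obtain ⟨⟨η, hη⟩, hlt⟩ := lt_iSup_iff.1 (hc.trans_le (iInf_le _ ⟨V, hV⟩))
  exact ⟨η, hη, fun x1 h1 x2 h2 hd => hlt.trans_le (sInf_le ⟨x1, h1, x2, h2, hd, rfl⟩)⟩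

/-- Ekeland's principle for `φ_γ` on the pairs of points of `W` that are close to each other;
`γ` is chosen so large that the penalty lifts all other pairs above `s`. -/
theorem exists_penalized_ekeland_point [CompleteSpace X] (hlsc1 : LowerSemicontinuous φ1)
    (hlsc2 : LowerSemicontinuous φ2) (hbot1 : ∀ x, φ1 x ≠ ⊥) (hbot2 : ∀ x, φ2 x ≠ ⊥)
    {W : Set X} (hW : IsClosed W) {x₀ : X} (hx₀ : x₀ ∈ W) {s c e ηb ε η : ℝ}
    (hs : φ1 x₀ + φ2 x₀ = s) (hlow : ∀ p ∈ W ×ˢ W, (c : EReal) < φ1 p.1 + φ2 p.2)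
    (hηb : 0 < ηb)
    (hnear : ∀ p ∈ W ×ˢ W, dist p.1 p.2 < ηb → ((s - e : ℝ) : EReal) < φ1 p.1 + φ2 p.2)
    (hε : 0 < ε) (hη : 0 < η) :
    ∃ γ > 0, ∃ q : X × X, ε * dist q (x₀, x₀) ≤ e ∧ dist q.1 q.2 < η ∧
      penalizedSum φ1 φ2 γ q ≤ s ∧ ∀ p ∈ W ×ˢ W, p ≠ q →
        penalizedSum φ1 φ2 γ q < penalizedSum φ1 φ2 γ p + ((ε * dist p q : ℝ) : EReal) := by
  have hcs : c < s := by exact_mod_cast hs ▸ hlow (x₀, x₀) ⟨hx₀, hx₀⟩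
  set η' := min η ηb / 2
  have hη' : 0 < η' := half_pos (lt_min hη hηb)
  set γ := (s - c) / η'
  have hγ : 0 < γ := div_pos (sub_pos.2 hcs) hη'
  set K := W ×ˢ W ∩ {p : X × X | dist p.1 p.2 ≤ η'}
  have hK : IsComplete K :=
    ((hW.prod hW).inter (isClosed_le (continuous_fst.dist continuous_snd)
      continuous_const)).isComplete
  have hval : penalizedSum φ1 φ2 γ (x₀, x₀) = s := (penalizedSum_self γ x₀).trans hs
  have hbound : ∀ p ∈ K, ((s - e : ℝ) : EReal) ≤ penalizedSum φ1 φ2 γ p := fun p hp => by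
    have := lt_penalizedSum (hnear p hp.1 (hp.2.trans_lt (by grind)))
      (mul_nonneg hγ.le dist_nonneg)
    rw [add_zero] at this
    exact this.le
  obtain ⟨q, hqK, hqle, hdist, hmin⟩ := hK.exists_ekeland_point_ereal
    (lowerSemicontinuous_penalizedSum hlsc1 hlsc2 hbot1 hbot2 γ) hε hbound
    (y₀ := (x₀, x₀)) (ε := e) ⟨⟨hx₀, hx₀⟩, by simpa using hη'.le⟩ (by rw [hval]; simp)
  rw [hval] at hqle
  refine ⟨γ, hγ, q, hdist, hqK.2.trans_lt (by grind), hqle, fun p hp hne => ?_⟩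
  by_cases hpK : dist p.1 p.2 ≤ η'
  · exact hmin p ⟨hp, hpK⟩ hne
  have hfar : (s : EReal) < penalizedSum φ1 φ2 γ p := by
    have hpen : s - c ≤ γ * dist p.1 p.2 := by
      rw [div_mul_eq_mul_div, le_div_iff₀ hη']
      nlinarith
    simpa using lt_penalizedSum (hlow p hp) hpen
  calc penalizedSum φ1 φ2 γ q < penalizedSum φ1 φ2 γ p := hqle.trans_lt hfar
    _ ≤ _ := le_add_of_nonneg_right (EReal.coe_nonneg.2 (by positivity))

end PenalizedSum

/-- Primal necessary conditions at a quasiuniform stationary point of `φ1 + φ2`. -/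
theorem stmt19 {X : Type*} [MetricSpace X] [CompleteSpace X]
    (φ1 φ2 : X → EReal) (hbot1 : ∀ x, φ1 x ≠ ⊥) (hbot2 : ∀ x, φ2 x ≠ ⊥)
    (hlsc1 : LowerSemicontinuous φ1) (hlsc2 : LowerSemicontinuous φ2)
    (x₀ : X) (hx₀1 : φ1 x₀ < ⊤) (hx₀2 : φ2 x₀ < ⊤)
    (hstat : ∀ ε : ℝ, 0 < ε → ∃ δε : ℝ, 0 < δε ∧ ∀ δ : ℝ, 0 < δ → δ < δε →
      φ1 x₀ + φ2 x₀ < lambdaDag φ1 φ2 (Metric.ball x₀ δ) + ((ε * δ : ℝ) : EReal)) :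
    ∀ ε : ℝ, 0 < ε → ∃ ρ : ℝ, 0 < ρ ∧ ρ < ε ∧ ∀ η : ℝ, 0 < η →
      ∃ γ : ℝ, 0 < γ ∧ ∃ xh1 xh2 : X,
        max (dist xh1 x₀) (dist xh2 x₀) < ρ ∧
        dist xh1 xh2 < η ∧
        φ1 xh1 + φ2 xh2 + ((γ * dist xh1 xh2 : ℝ) : EReal) ≤ φ1 x₀ + φ2 x₀ ∧
        ∀ u1 ∈ Metric.closedBall x₀ ρ, ∀ u2 ∈ Metric.closedBall x₀ ρ,
          (u1, u2) ≠ (xh1, xh2) →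
          (φ1 xh1 + φ2 xh2 + ((γ * dist xh1 xh2 : ℝ) : EReal)) -
              (φ1 u1 + φ2 u2 + ((γ * dist u1 u2 : ℝ) : EReal)) <
            ((ε * max (dist u1 xh1) (dist u2 xh2) : ℝ) : EReal) := by
  intro ε hε
  obtain ⟨s, hs⟩ : ∃ s : ℝ, φ1 x₀ + φ2 x₀ = s :=
    ⟨_, (EReal.coe_toReal (EReal.add_lt_top hx₀1.ne hx₀2.ne).ne
      (EReal.add_ne_bot_iff.2 ⟨hbot1 x₀, hbot2 x₀⟩)).symm⟩
  obtain ⟨r, hr, hlow⟩ := Metric.eventually_nhds_iff.1 <|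
    lowerSemicontinuous_add_prod hlsc1 hlsc2 hbot1 hbot2 (x₀, x₀) ((s - 1 : ℝ) : EReal)
      (show ((s - 1 : ℝ) : EReal) < φ1 x₀ + φ2 x₀ by rw [hs]; exact_mod_cast sub_one_lt s)
  obtain ⟨δε, hδε, hstatδ⟩ := hstat (ε / 4) (by positivity)
  set δ := min δε (min ε r) / 2
  have hδ : 0 < δ := half_pos (lt_min hδε (lt_min hε hr))
  obtain ⟨ηb, hηb, hnear⟩ := exists_forall_lt_add_of_lt_lambdaDag
    (essInt_ball_closedBall (half_lt_self hδ)) (c := ((s - ε / 4 * δ : ℝ) : EReal))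
    (by rw [EReal.coe_sub]; exact EReal.sub_lt_of_lt_add (hs ▸ hstatδ δ hδ (by grind)))
  refine ⟨δ / 2, half_pos hδ, by grind, fun η hη => ?_⟩
  obtain ⟨γ, hγ, q, hqdist, hq, hqle, hqmin⟩ := exists_penalized_ekeland_point hlsc1 hlsc2
    hbot1 hbot2 isClosed_closedBall (mem_closedBall_self (half_pos hδ).le) hs
    (fun p hp => hlow ((Prod.dist_eq.trans_le (max_le hp.1 hp.2)).trans_lt (by grind)))
    hηb (fun p hp => hnear p.1 hp.1 p.2 hp.2) hε hη
  refine ⟨γ, hγ, q.1, q.2, ?_, hq, hs ▸ hqle, fun u1 hu1 u2 hu2 hne =>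
    EReal.sub_lt_of_lt_add' ?_⟩
  · rw [Prod.dist_eq] at hqdist
    nlinarith
  · have := hqmin (u1, u2) ⟨hu1, hu2⟩ hne
    rwa [Prod.dist_eq] at this
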